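/- arXiv:2209.02228 — 3 statements merged into one kernel-verified Lean document; each statement's English description precedes it below -/
import Mathlib

section
/- If 2^{-(i+1)} < p_s < 2^{-i}, L = 2^R, and L_s = L·p_s (assumed to be a positive integer), then for every state x ∈ {2^R, ..., 2^{R+1}-1}, the encoding length k_s(x) = ⌊log₂(x / L_s)⌋ belongs to the set {i, i+1}. -/
/-!
Writing `L_s = 2^R p`, the ratio `x / L_s` is `(x / 2^R) / p` with `x / 2^R ∈ [1, 2)` and
`1 / p ∈ (2^i, 2^(i+1))`, so `x / L_s ∈ [2^i, 2^(i+2))`: a window of two binary orders of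
magnitude, on which `⌊log₂⌋` takes only the values `i` and `i + 1`.
-/

open Real

lemma floor_logb_eq_or_eq_add_one_of_zpow_le_of_lt_zpow {b y : ℝ} {n : ℤ} (hb : 1 < b)
    (hlo : b ^ n ≤ y) (hhi : y < b ^ (n + 2)) : ⌊logb b y⌋ = n ∨ ⌊logb b y⌋ = n + 1 := by
  have hy : 0 < y := (zpow_pos (by linarith) n).trans_le hlo
  have hle : n ≤ ⌊logb b y⌋ :=
    Int.le_floor.2 <| (le_logb_iff_rpow_le hb hy).2 <| by rwa [rpow_intCast]
  have hlt : ⌊logb b y⌋ < n + 2 :=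
    Int.floor_lt.2 <| (logb_lt_iff_lt_rpow hb hy).2 <| by rwa [rpow_intCast]
  omega

lemma zpow_le_div_and_div_lt_zpow_add_two {b q p : ℝ} {i : ℤ} (hb : 0 < b) (hq1 : 1 ≤ q)
    (hqb : q < b) (hp1 : b ^ (-(i + 1)) < p) (hp2 : p < b ^ (-i)) :
    b ^ i ≤ q / p ∧ q / p < b ^ (i + 2) := by
  have hp : 0 < p := (zpow_pos hb _).trans hp1
  rw [zpow_neg, ← one_div, div_lt_iff₀ (zpow_pos hb _)] at hp1
  rw [zpow_neg, ← one_div, lt_div_iff₀ (zpow_pos hb _)] at hp2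
  rw [le_div_iff₀ hp, div_lt_iff₀ hp]
  constructor
  · linarith
  · calc q < b * 1 := by rwa [mul_one]
      _ < b * (p * b ^ (i + 1)) := mul_lt_mul_of_pos_left hp1 hb
      _ = b ^ (i + 2) * p := by
        rw [zpow_add₀ hb.ne', zpow_add₀ hb.ne', zpow_one, zpow_two]; ring

theorem stmt1_general (i R : ℕ) (p : ℝ) (Ls : ℕ)
    (hLs : (Ls : ℝ) = (2:ℝ) ^ R * p)
    (h1 : (2:ℝ) ^ (-((i:ℤ) + 1)) < p) (h2 : p < (2:ℝ) ^ (-(i:ℤ)))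
    (x : ℕ) (hx1 : 2 ^ R ≤ x) (hx2 : x ≤ 2 ^ (R + 1) - 1) :
    ⌊Real.logb 2 ((x : ℝ) / (Ls : ℝ))⌋ = (i : ℤ) ∨
      ⌊Real.logb 2 ((x : ℝ) / (Ls : ℝ))⌋ = (i : ℤ) + 1 := by
  have hxlt : x < 2 ^ (R + 1) := by
    have := Nat.one_le_two_pow (n := R + 1)
    omega
  have h2R : (0 : ℝ) < 2 ^ R := by positivity
  have hq1 : 1 ≤ (x : ℝ) / 2 ^ R := by
    rw [one_le_div h2R]
    exact_mod_cast hx1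
  have hq2 : (x : ℝ) / 2 ^ R < 2 := by
    rw [div_lt_iff₀ h2R, ← pow_succ']
    exact_mod_cast hxlt
  obtain ⟨hlo, hhi⟩ := zpow_le_div_and_div_lt_zpow_add_two two_pos hq1 hq2 h1 h2
  rw [div_div, ← hLs] at hlo hhi
  exact floor_logb_eq_or_eq_add_one_of_zpow_le_of_lt_zpow one_lt_two (by exact_mod_cast hlo) hhi

/-- If `2^{-(i+1)} < p_s < 2^{-i}`, `L = 2^R`, and `L_s = L * p_s` is a positive integer,
then for every state `x ∈ {2^R, …, 2^{R+1}-1}` the encoding length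
`⌊log₂ (x / L_s)⌋` belongs to `{i, i+1}`. -/
theorem stmt1 (i R : ℕ) (p : ℝ) (Ls : ℕ) (hLspos : 0 < Ls)
    (hLs : (Ls : ℝ) = (2:ℝ) ^ R * p)
    (h1 : (2:ℝ) ^ (-((i:ℤ) + 1)) < p) (h2 : p < (2:ℝ) ^ (-(i:ℤ)))
    (x : ℕ) (hx1 : 2 ^ R ≤ x) (hx2 : x ≤ 2 ^ (R + 1) - 1) :
    ⌊Real.logb 2 ((x : ℝ) / (Ls : ℝ))⌋ = (i : ℤ) ∨
      ⌊Real.logb 2 ((x : ℝ) / (Ls : ℝ))⌋ = (i : ℤ) + 1 :=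
  stmt1_general i R p Ls hLs h1 h2 x hx1 hx2
end

section
/- Suppose every symbol probability is a natural power of 1/2, i.e. p_s = 2^{-i_s} with Σ_s 2^{-i_s} = 1, and ANS is built with L = 2^R states where R ≥ max_s i_s and L_s = 2^{R - i_s}. Then for any distribution of states, the average encoding length Σ_s p_s · Σ_x π(x) k_s(x) equals the source entropy H = Σ_s p_s · i_s, for any probability distribution π on states. In particular ANS is optimal for such sources. -/
/-! Every state `x` lies in `[2^R, 2^(R+1))`, so `x / L_s = x / 2^(R - i_s)` lies in
`[2^(i_s), 2^(i_s + 1))` and the encoding length `k_s(x)` is exactly `i_s`, independently of `x`.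
Averaging against weights `π` that sum to `1` therefore gives `i_s` for each symbol. -/

open Finset

namespace Real

theorem floor_logb_eq_of_zpow_le_of_lt_zpow {b : ℕ} (hb : 1 < b) {r : ℝ} {k : ℤ}
    (hk : (b : ℝ) ^ k ≤ r) (hr : r < (b : ℝ) ^ (k + 1)) : ⌊logb b r⌋ = k := by
  have hr0 : 0 < r := (zpow_pos (by exact_mod_cast hb.trans' zero_lt_one) k).trans_le hk
  rw [floor_logb_natCast hr0.le]
  exact le_antisymm (Int.lt_add_one_iff.mp ((Int.lt_zpow_iff_log_lt hb hr0).mp hr))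
    ((Int.zpow_le_iff_le_log hb hr0).mp hk)

end Real

theorem floor_logb_two_div_two_pow_sub_eq {R k x : ℕ} (hk : k ≤ R)
    (hx₁ : 2 ^ R ≤ x) (hx₂ : x < 2 ^ (R + 1)) :
    ⌊Real.logb 2 ((x : ℝ) / ((2 ^ (R - k) : ℕ) : ℝ))⌋ = k := by
  have hL : (0 : ℝ) < 2 ^ (R - k) := by positivity
  have hR : (2 : ℝ) ^ R = 2 ^ k * 2 ^ (R - k) := by rw [← pow_add, Nat.add_sub_cancel' hk]
  have h := Real.floor_logb_eq_of_zpow_le_of_lt_zpow (b := 2) one_lt_two (r := x / 2 ^ (R - k))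
    (k := k) ?_ ?_
  · exact_mod_cast h
  · rw [Nat.cast_ofNat, zpow_natCast, le_div_iff₀ hL, ← hR]
    exact_mod_cast hx₁
  · rw [Nat.cast_ofNat, ← Nat.cast_succ, zpow_natCast, div_lt_iff₀ hL, pow_succ, mul_right_comm,
      ← hR, ← pow_succ]
    exact_mod_cast hx₂

theorem stmt3_general {α : Type*} (S : Finset α) (i : α → ℕ) (R : ℕ)
    (hR : ∀ s ∈ S, i s ≤ R)
    (π : ℕ → ℝ)
    (hπ1 : ∑ x ∈ Finset.Icc (2 ^ R) (2 ^ (R + 1) - 1), π x = 1) :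
    ∑ s ∈ S, (2:ℝ) ^ (-(i s : ℤ)) *
        ∑ x ∈ Finset.Icc (2 ^ R) (2 ^ (R + 1) - 1),
          π x * (⌊Real.logb 2 ((x : ℝ) / ((2 ^ (R - i s) : ℕ) : ℝ))⌋ : ℝ)
      = ∑ s ∈ S, (2:ℝ) ^ (-(i s : ℤ)) * (i s : ℝ) := by
  refine sum_congr rfl fun s hs => congrArg _ ?_
  have hlength : ∀ x ∈ Icc (2 ^ R) (2 ^ (R + 1) - 1),
      π x * (⌊Real.logb 2 ((x : ℝ) / ((2 ^ (R - i s) : ℕ) : ℝ))⌋ : ℝ) = π x * i s := by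
    intro x hx
    have hx₂ : x < 2 ^ (R + 1) := by
      have := (mem_Icc.mp hx).2
      have := Nat.one_le_two_pow (n := R + 1)
      omega
    rw [floor_logb_two_div_two_pow_sub_eq (hR s hs) (mem_Icc.mp hx).1 hx₂, Int.cast_natCast]
  rw [sum_congr rfl hlength, ← sum_mul, hπ1, one_mul]

/-- If every symbol probability is a natural power of `1/2`, i.e. `p_s = 2^{-i_s}` with
`∑ 2^{-i_s} = 1`, `R ≥ max i_s` and `L_s = 2^{R - i_s}`, then for any probability
distribution `π` on the states the average encoding length equals the entropy
`∑ p_s · i_s`. -/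
theorem stmt3 {α : Type*} (S : Finset α) (i : α → ℕ) (R : ℕ)
    (hR : ∀ s ∈ S, i s ≤ R)
    (hsum : ∑ s ∈ S, (2:ℝ) ^ (-(i s : ℤ)) = 1)
    (π : ℕ → ℝ) (hπ0 : ∀ x, 0 ≤ π x)
    (hπ1 : ∑ x ∈ Finset.Icc (2 ^ R) (2 ^ (R + 1) - 1), π x = 1) :
    ∑ s ∈ S, (2:ℝ) ^ (-(i s : ℤ)) *
        ∑ x ∈ Finset.Icc (2 ^ R) (2 ^ (R + 1) - 1),
          π x * (⌊Real.logb 2 ((x : ℝ) / ((2 ^ (R - i s) : ℕ) : ℝ))⌋ : ℝ)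
      = ∑ s ∈ S, (2:ℝ) ^ (-(i s : ℤ)) * (i s : ℝ) :=
  stmt3_general S i R hR π hπ1
end

section
/- The ANS encoding and decoding functions are mutually inverse: if C(s,y) = x is the bijection from pairs (s,y) with y ∈ {L_s, ..., 2L_s - 1} onto the state set 𝕀 (determined by a symbol spread), and D = C^{-1}, then one encoding step followed by one decoding step recovers the original state and symbol: for any state x ∈ 𝕀 and symbol s, writing k = ⌊log₂(x/L_s)⌋, b = x mod 2^k, x' = C(s, ⌊x/2^k⌋), we have D(x') = (s, ⌊x/2^k⌋) and 2^k·⌊x/2^k⌋ + b = x. -/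
/-!
Writing `q = x / L_s`, the exponent is `k = Nat.log 2 q`, so `2^k ≤ q < 2^(k+1)`, i.e.
`2^k L_s ≤ x < 2^(k+1) L_s`; dividing by `2^k` puts `⌊x/2^k⌋` in `{L_s, …, 2L_s - 1}`, the domain on
which `D` inverts `C`. The recovery identity is Euclidean division by `2^k`.
-/

lemma Real.floor_logb_div_natCast_toNat {b x L : ℕ} (hL : 0 < L) (hLx : L ≤ x) :
    (⌊Real.logb b ((x : ℝ) / L)⌋).toNat = Nat.log b (x / L) := by
  have hq : (1 : ℝ) ≤ (x : ℝ) / L := by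
    rw [one_le_div (by exact_mod_cast hL)]
    exact_mod_cast hLx
  rw [Real.floor_logb_natCast (zero_le_one.trans hq), Int.log_of_one_le_right _ hq,
    Nat.floor_div_eq_div, Int.toNat_natCast]

lemma Nat.le_div_pow_log_div {b x L : ℕ} (hb : 1 < b) (hL : 0 < L) (hLx : L ≤ x) :
    L ≤ x / b ^ Nat.log b (x / L) := by
  rw [Nat.le_div_iff_mul_le (Nat.pow_pos (zero_lt_one.trans hb)), mul_comm,
    ← Nat.le_div_iff_mul_le hL]
  exact Nat.pow_log_le_self b (Nat.div_pos hLx hL).ne'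

lemma Nat.div_pow_log_div_lt {b : ℕ} (hb : 1 < b) (x : ℕ) {L : ℕ} (hL : 0 < L) :
    x / b ^ Nat.log b (x / L) < b * L := by
  rw [Nat.div_lt_iff_lt_mul (Nat.pow_pos (zero_lt_one.trans hb)), mul_assoc, mul_comm L,
    ← mul_assoc, ← pow_succ', ← Nat.div_lt_iff_lt_mul hL]
  exact Nat.lt_pow_succ_log_self hb _

theorem stmt13_general {α : Type*} (R : ℕ) (Ls : α → ℕ)
    (C : α → ℕ → ℕ) (D : ℕ → α × ℕ)
    (hDC : ∀ s y, Ls s ≤ y → y ≤ 2 * Ls s - 1 → D (C s y) = (s, y))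
    (s : α) (hLs1 : 1 ≤ Ls s) (hLs2 : Ls s ≤ 2 ^ R)
    (x : ℕ) (hx1 : 2 ^ R ≤ x) :
    let k : ℕ := (⌊Real.logb 2 ((x : ℝ) / (Ls s : ℝ))⌋).toNat
    Ls s ≤ x / 2 ^ k ∧ x / 2 ^ k ≤ 2 * Ls s - 1 ∧
      D (C s (x / 2 ^ k)) = (s, x / 2 ^ k) ∧
      2 ^ k * (x / 2 ^ k) + x % 2 ^ k = x := by
  intro k
  have hLx : Ls s ≤ x := hLs2.trans hx1
  have hk : k = Nat.log 2 (x / Ls s) := by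
    simpa only [Nat.cast_ofNat] using Real.floor_logb_div_natCast_toNat (b := 2) hLs1 hLx
  have hlow : Ls s ≤ x / 2 ^ k := hk ▸ Nat.le_div_pow_log_div one_lt_two hLs1 hLx
  have hhigh : x / 2 ^ k ≤ 2 * Ls s - 1 :=
    Nat.le_sub_one_of_lt (hk ▸ Nat.div_pow_log_div_lt one_lt_two x hLs1)
  exact ⟨hlow, hhigh, hDC s _ hlow hhigh, Nat.div_add_mod x (2 ^ k)⟩

/-- One ANS encoding step followed by one decoding step recovers the original state and
symbol: if `D` inverts `C` on its domain, then for any state `x ∈ {L, …, 2L-1}` and any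
symbol `s`, with `k = ⌊log₂(x/L_s)⌋`, `b = x mod 2^k` and `x' = C(s, ⌊x/2^k⌋)`, the
intermediate value `⌊x/2^k⌋` lies in `{L_s, …, 2L_s - 1}`, `D x' = (s, ⌊x/2^k⌋)` and
`2^k·⌊x/2^k⌋ + b = x`. -/
theorem stmt13 {α : Type*} (R : ℕ) (Ls : α → ℕ)
    (C : α → ℕ → ℕ) (D : ℕ → α × ℕ)
    (hDC : ∀ s y, Ls s ≤ y → y ≤ 2 * Ls s - 1 → D (C s y) = (s, y))
    (s : α) (hLs1 : 1 ≤ Ls s) (hLs2 : Ls s ≤ 2 ^ R)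
    (x : ℕ) (hx1 : 2 ^ R ≤ x) (hx2 : x ≤ 2 * 2 ^ R - 1) :
    let k : ℕ := (⌊Real.logb 2 ((x : ℝ) / (Ls s : ℝ))⌋).toNat
    Ls s ≤ x / 2 ^ k ∧ x / 2 ^ k ≤ 2 * Ls s - 1 ∧
      D (C s (x / 2 ^ k)) = (s, x / 2 ^ k) ∧
      2 ^ k * (x / 2 ^ k) + x % 2 ^ k = x :=
  stmt13_general R Ls C D hDC s hLs1 hLs2 x hx1
end
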